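/- Let H be a real Hilbert space and K ⊆ H a nonempty, closed, convex set whose diameter is at most D. Let l_1, …, l_T : H → ℝ be convex differentiable functions whose gradients satisfy ‖∇l_t(x)‖ ≤ G for all x ∈ K and all t. Define iterates by x_1 ∈ K and x_{t+1} = P_K(x_t − η_t ∇l_t(x_t)) with time-varying step sizes η_t = D/(G·√t), where P_K is the metric projection onto K. Then for every x* ∈ K, Σ_{t=1}^T l_t(x_t) − Σ_{t=1}^T l_t(x*) ≤ (3/2)·G·D·√T. -/

import Mathlib

/-!
Convexity linearizes the regret: `l t (x t) - l t x* ≤ ⟪g t, x t - x*⟫` with `g t = ∇ l t (x t)`.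
Projecting onto `K` does not increase the distance to `x* ∈ K`, so expanding a square gives
`2 η t ⟪g t, x t - x*⟫ ≤ ‖x t - x*‖² - ‖x (t+1) - x*‖² + η t² G²`. Divide by `2 η t` and sum:
since `1 / η t` increases and `‖x t - x*‖ ≤ D`, summation by parts bounds the first terms by
`D² / (2 η T) = G D √T / 2`, while the second ones add up to `(G D / 2) ∑ 1 / √t ≤ G D √T`.
-/

open Finset
open scoped RealInnerProductSpace

theorem ConvexOn.hasFDerivAt_apply_sub_le {E : Type*} [NormedAddCommGroup E] [NormedSpace ℝ E]
    {s : Set E} {f : E → ℝ} {f' : E →L[ℝ] ℝ} {x y : E} (hf : ConvexOn ℝ s f) (hx : x ∈ s)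
    (hy : y ∈ s) (hd : HasFDerivAt f f' x) :
    f' (y - x) ≤ f y - f x := by
  have hγ : HasDerivAt (AffineMap.lineMap x y) (y - x) (0 : ℝ) := AffineMap.hasDerivAt_lineMap
  have hslope := (hf.comp_affineMap (AffineMap.lineMap x y)).le_slope_of_hasDerivAt
    (by simpa using hx) (by simpa using hy) zero_lt_one
    (by simpa using hd.comp_hasDerivAt_of_eq (0 : ℝ) hγ (by simp))
  simpa [slope] using hslope

theorem ConvexOn.sub_le_inner_gradient {H : Type*} [NormedAddCommGroup H]
    [InnerProductSpace ℝ H] [CompleteSpace H] {s : Set H} {f : H → ℝ} {x y : H}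
    (hf : ConvexOn ℝ s f) (hx : x ∈ s) (hy : y ∈ s) (hd : DifferentiableAt ℝ f x) :
    f x - f y ≤ ⟪gradient f x, x - y⟫ := by
  rw [inner_gradient_left, ← neg_sub y x, map_neg]
  linarith [hf.hasFDerivAt_apply_sub_le hx hy hd.hasFDerivAt]

theorem Convex.norm_sub_le_of_isMinOn_norm_sub {F : Type*} [NormedAddCommGroup F]
    [InnerProductSpace ℝ F] {K : Set F} (hK : Convex ℝ K) {z p c : F} (hp : p ∈ K)
    (hmin : IsMinOn (fun w => ‖z - w‖) K p) (hc : c ∈ K) :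
    ‖p - c‖ ≤ ‖z - c‖ := by
  have hvar : ⟪z - p, c - p⟫ ≤ 0 :=
    (norm_eq_iInf_iff_real_inner_le_zero hK hp).mp (hmin.iInf_eq hp).symm c hc
  have hpyth : ‖z - c‖ ^ 2 = ‖z - p‖ ^ 2 - 2 * ⟪z - p, c - p⟫ + ‖p - c‖ ^ 2 := by
    rw [show z - c = (z - p) - (c - p) by abel, norm_sub_sq_real, norm_sub_rev c p]
  nlinarith [norm_nonneg (p - c), norm_nonneg (z - c), sq_nonneg ‖z - p‖]

theorem Finset.sum_Icc_sub_succ_mul_le {a w : ℕ → ℝ} {B : ℝ} {T : ℕ} (hT : 1 ≤ T)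
    (haB : ∀ t ∈ Icc 1 T, a t ≤ B) (ha : 0 ≤ a (T + 1)) (hw₁ : 0 ≤ w 1)
    (hw : MonotoneOn w (Set.Icc 1 T)) :
    ∑ t ∈ Icc 1 T, (a t - a (t + 1)) * w t ≤ B * w T := by
  have hprefix : ∀ n, 1 ≤ n → n ≤ T →
      ∑ t ∈ Icc 1 n, (a t - a (t + 1)) * w t ≤ (B - a (n + 1)) * w n := by
    intro n hn
    induction n, hn using Nat.le_induction with
    | base =>
      intro _
      have := haB 1 (by simp [hT])
      simp only [Icc_self, sum_singleton]
      nlinarith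
    | succ n hn ih =>
      intro hnT
      have hmono : w n ≤ w (n + 1) := hw ⟨hn, by omega⟩ ⟨by omega, hnT⟩ (by omega)
      have hB : 0 ≤ B - a (n + 1) := sub_nonneg.mpr (haB (n + 1) (by simp [hnT]))
      rw [sum_Icc_succ_top (by omega)]
      nlinarith [ih (by omega), mul_le_mul_of_nonneg_left hmono hB]
  have hwT : 0 ≤ w T := hw₁.trans (hw ⟨le_rfl, hT⟩ ⟨hT, le_rfl⟩ hT)
  nlinarith [hprefix T hT le_rfl, mul_nonneg ha hwT]

theorem sum_Icc_inv_sqrt_le (T : ℕ) : ∑ t ∈ Icc 1 T, (√t)⁻¹ ≤ 2 * √T := by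
  induction T with
  | zero => simp
  | succ n ih =>
    rw [sum_Icc_succ_top (by omega)]
    have hpos : 0 < √(n + 1 : ℝ) := Real.sqrt_pos.mpr (by positivity)
    have hmono : √(n : ℝ) ≤ √(n + 1 : ℝ) := Real.sqrt_le_sqrt (by linarith)
    have hsq : √(n + 1 : ℝ) ^ 2 = √(n : ℝ) ^ 2 + 1 := by
      rw [Real.sq_sqrt (by positivity), Real.sq_sqrt (by positivity)]
    have hstep : (√(n + 1 : ℝ))⁻¹ ≤ 2 * √(n + 1 : ℝ) - 2 * √(n : ℝ) := by
      rw [inv_le_iff_one_le_mul₀' hpos]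
      nlinarith [Real.sqrt_nonneg (n : ℝ)]
    push_cast
    linarith

theorem two_mul_inner_le_of_norm_sub_le {F : Type*} [NormedAddCommGroup F]
    [InnerProductSpace ℝ F] {x g z c : F} {η : ℝ} (hz : ‖z - c‖ ≤ ‖x - η • g - c‖) :
    2 * η * ⟪g, x - c⟫ ≤ ‖x - c‖ ^ 2 - ‖z - c‖ ^ 2 + η ^ 2 * ‖g‖ ^ 2 := by
  have hexpand : ‖x - η • g - c‖ ^ 2 = ‖x - c‖ ^ 2 - 2 * η * ⟪g, x - c⟫ + η ^ 2 * ‖g‖ ^ 2 := by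
    rw [show x - η • g - c = (x - c) - η • g by abel, norm_sub_sq_real, real_inner_smul_right,
      real_inner_comm, norm_smul, mul_pow, Real.norm_eq_abs, sq_abs]
    ring
  nlinarith [pow_le_pow_left₀ (norm_nonneg _) hz 2]

theorem sum_inner_le_of_norm_step_le {F : Type*} [NormedAddCommGroup F] [InnerProductSpace ℝ F]
    {x g : ℕ → F} {η : ℕ → ℝ} {c : F} {D : ℝ} {T : ℕ} (hT : 1 ≤ T)
    (hη : ∀ t ∈ Icc 1 T, 0 < η t) (hη_anti : AntitoneOn η (Set.Icc 1 T))
    (hxD : ∀ t ∈ Icc 1 T, ‖x t - c‖ ≤ D)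
    (hstep : ∀ t ∈ Icc 1 T, ‖x (t + 1) - c‖ ≤ ‖x t - η t • g t - c‖) :
    ∑ t ∈ Icc 1 T, ⟪g t, x t - c⟫
      ≤ D ^ 2 / (2 * η T) + ∑ t ∈ Icc 1 T, η t * ‖g t‖ ^ 2 / 2 := by
  set a : ℕ → ℝ := fun t => ‖x t - c‖ ^ 2
  have hterm : ∀ t ∈ Icc 1 T,
      ⟪g t, x t - c⟫ ≤ (a t - a (t + 1)) * (2 * η t)⁻¹ + η t * ‖g t‖ ^ 2 / 2 := by
    intro t ht
    have hηt := hη t ht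
    have := two_mul_inner_le_of_norm_sub_le (hstep t ht)
    rw [← div_eq_mul_inv, div_add_div _ _ (by positivity) two_ne_zero, le_div_iff₀ (by positivity)]
    nlinarith
  have htelescope : ∑ t ∈ Icc 1 T, (a t - a (t + 1)) * (2 * η t)⁻¹ ≤ D ^ 2 * (2 * η T)⁻¹ := by
    refine sum_Icc_sub_succ_mul_le hT
      (fun t ht => pow_le_pow_left₀ (norm_nonneg _) (hxD t ht) 2) (sq_nonneg _)
      (inv_nonneg.mpr (by linarith [hη 1 (by simp [hT])])) ?_
    intro s hs t ht hst
    have := hη t (mem_Icc.mpr ht)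
    dsimp only
    gcongr
    exact hη_anti hs ht hst
  calc ∑ t ∈ Icc 1 T, ⟪g t, x t - c⟫
      ≤ ∑ t ∈ Icc 1 T, ((a t - a (t + 1)) * (2 * η t)⁻¹ + η t * ‖g t‖ ^ 2 / 2) := sum_le_sum hterm
    _ ≤ D ^ 2 / (2 * η T) + ∑ t ∈ Icc 1 T, η t * ‖g t‖ ^ 2 / 2 := by
      rw [sum_add_distrib, div_eq_mul_inv]
      gcongr

theorem sum_inner_le_of_norm_step_le_of_eq_div_sqrt {F : Type*} [NormedAddCommGroup F]
    [InnerProductSpace ℝ F] {x g : ℕ → F} {η : ℕ → ℝ} {c : F} {D G : ℝ} {T : ℕ} (hT : 1 ≤ T)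
    (hD : 0 < D) (hG : 0 < G) (hg : ∀ t ∈ Icc 1 T, ‖g t‖ ≤ G)
    (hη : ∀ t ∈ Icc 1 T, η t = D / (G * √t)) (hxD : ∀ t ∈ Icc 1 T, ‖x t - c‖ ≤ D)
    (hstep : ∀ t ∈ Icc 1 T, ‖x (t + 1) - c‖ ≤ ‖x t - η t • g t - c‖) :
    ∑ t ∈ Icc 1 T, ⟪g t, x t - c⟫ ≤ 3 / 2 * G * D * √T := by
  have hsqrt : ∀ t ∈ Icc 1 T, 0 < √(t : ℝ) := fun t ht =>
    Real.sqrt_pos.mpr (by exact_mod_cast (mem_Icc.mp ht).1)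
  have hηpos : ∀ t ∈ Icc 1 T, 0 < η t := fun t ht => by
    have := hsqrt t ht
    rw [hη t ht]
    positivity
  have hη_anti : AntitoneOn η (Set.Icc 1 T) := by
    intro s hs t ht hst
    have := hsqrt s (mem_Icc.mpr hs)
    rw [hη s (mem_Icc.mpr hs), hη t (mem_Icc.mpr ht)]
    gcongr
  have hlast : D ^ 2 / (2 * η T) = G * D * √T / 2 := by
    have := hsqrt T (by simp [hT])
    rw [hη T (by simp [hT])]
    field_simp
  have hsum : ∑ t ∈ Icc 1 T, η t * ‖g t‖ ^ 2 / 2 ≤ G * D / 2 * ∑ t ∈ Icc 1 T, (√t)⁻¹ := by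
    rw [mul_sum]
    refine sum_le_sum fun t ht => ?_
    have := hsqrt t ht
    have hgt : ‖g t‖ ^ 2 ≤ G ^ 2 := pow_le_pow_left₀ (norm_nonneg _) (hg t ht) 2
    rw [hη t ht]
    calc D / (G * √t) * ‖g t‖ ^ 2 / 2 ≤ D / (G * √t) * G ^ 2 / 2 := by gcongr
      _ = G * D / 2 * (√t)⁻¹ := by field_simp
  calc ∑ t ∈ Icc 1 T, ⟪g t, x t - c⟫
      ≤ D ^ 2 / (2 * η T) + ∑ t ∈ Icc 1 T, η t * ‖g t‖ ^ 2 / 2 :=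
        sum_inner_le_of_norm_step_le hT hηpos hη_anti hxD hstep
    _ ≤ G * D * √T / 2 + G * D / 2 * (2 * √T) := by
      rw [hlast]
      gcongr
      exact hsum.trans (by gcongr; exact sum_Icc_inv_sqrt_le T)
    _ = 3 / 2 * G * D * √T := by ring

theorem ogd_regret_decreasing_step_general
    {H : Type*} [NormedAddCommGroup H] [InnerProductSpace ℝ H] [CompleteSpace H]
    (K : Set H) (hKconv : Convex ℝ K)
    (D G : ℝ) (hD : 0 ≤ D) (hG : 0 < G)
    (hdiam : ∀ x ∈ K, ∀ y ∈ K, ‖x - y‖ ≤ D)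
    (T : ℕ) (hT : 0 < T)
    (l : ℕ → H → ℝ)
    (hconv : ∀ t ∈ Finset.Icc 1 T, ConvexOn ℝ Set.univ (l t))
    (hdiff : ∀ t ∈ Finset.Icc 1 T, Differentiable ℝ (l t))
    (hgrad : ∀ t ∈ Finset.Icc 1 T, ∀ x ∈ K, ‖gradient (l t) x‖ ≤ G)
    (proj : H → H)
    (hprojMem : ∀ z, proj z ∈ K)
    (hprojNear : ∀ z, ∀ c ∈ K, ‖z - proj z‖ ≤ ‖z - c‖)
    (η : ℕ → ℝ) (hη : ∀ t, 1 ≤ t → t ≤ T → η t = D / (G * Real.sqrt t))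
    (x : ℕ → H) (hx1 : x 1 ∈ K)
    (hstep : ∀ t, 1 ≤ t → t < T → x (t + 1) = proj (x t - η t • gradient (l t) (x t)))
    (xstar : H) (hxstar : xstar ∈ K) :
    ∑ t ∈ Finset.Icc 1 T, l t (x t) - ∑ t ∈ Finset.Icc 1 T, l t xstar
      ≤ (3 / 2) * G * D * Real.sqrt T := by
  have hmem : ∀ t ∈ Icc 1 T, x t ∈ K := by
    rintro (_ | _ | n) ht
    · simp at ht
    · exact hx1
    · rw [hstep (n + 1) (by omega) (by simp at ht; omega)]
      exact hprojMem _
  obtain rfl | hDpos := hD.eq_or_lt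
  · have hxeq : ∀ t ∈ Icc 1 T, x t = xstar := fun t ht =>
      sub_eq_zero.mp (norm_le_zero_iff.mp (hdiam _ (hmem t ht) _ hxstar))
    simp [sum_congr rfl fun t ht => congrArg (l t) (hxeq t ht)]
  set g : ℕ → H := fun t => gradient (l t) (x t)
  -- `hstep` says nothing about `x (T + 1)`: replace it by one more projected step.
  set x' : ℕ → H := Function.update x (T + 1) (proj (x T - η T • g T))
  have hx' : ∀ t ∈ Icc 1 T, x' t = x t := fun t ht =>
    Function.update_of_ne (by simp at ht; omega) _ _
  have hstep' : ∀ t ∈ Icc 1 T, x' (t + 1) = proj (x' t - η t • g t) := by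
    intro t ht
    rw [hx' t ht]
    obtain hlt | rfl := (mem_Icc.mp ht).2.lt_or_eq
    · rw [hx' (t + 1) (by simp; omega)]
      exact hstep t (mem_Icc.mp ht).1 hlt
    · exact Function.update_self ..
  have hlinear := sum_inner_le_of_norm_step_le_of_eq_div_sqrt (x := x') (c := xstar) hT hDpos hG
    (fun t ht => hgrad t ht _ (hmem t ht)) (fun t ht => hη t (mem_Icc.mp ht).1 (mem_Icc.mp ht).2)
    (fun t ht => hx' t ht ▸ hdiam _ (hmem t ht) _ hxstar)
    (fun t ht => hstep' t ht ▸ hKconv.norm_sub_le_of_isMinOn_norm_sub (hprojMem _)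
      (isMinOn_iff.mpr (hprojNear _)) hxstar)
  calc ∑ t ∈ Icc 1 T, l t (x t) - ∑ t ∈ Icc 1 T, l t xstar
      = ∑ t ∈ Icc 1 T, (l t (x t) - l t xstar) := (sum_sub_distrib ..).symm
    _ ≤ ∑ t ∈ Icc 1 T, ⟪g t, x' t - xstar⟫ := sum_le_sum fun t ht => by
      rw [hx' t ht]
      exact (hconv t ht).sub_le_inner_gradient trivial trivial (hdiff t ht _)
    _ ≤ 3 / 2 * G * D * √T := hlinear

/-- Projected online gradient descent with time-varying step sizes
`η_t = D / (G √t)` over a nonempty closed convex set of diameter at most `D`,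
applied to convex differentiable losses with gradients bounded by `G` on the
domain, has regret at most `(3/2) · G · D · √T` against any fixed comparator
in the domain. -/
theorem ogd_regret_decreasing_step
    {H : Type*} [NormedAddCommGroup H] [InnerProductSpace ℝ H] [CompleteSpace H]
    (K : Set H) (hKne : K.Nonempty) (hKcl : IsClosed K) (hKconv : Convex ℝ K)
    (D G : ℝ) (hD : 0 ≤ D) (hG : 0 < G)
    (hdiam : ∀ x ∈ K, ∀ y ∈ K, ‖x - y‖ ≤ D)
    (T : ℕ) (hT : 0 < T)
    (l : ℕ → H → ℝ)
    (hconv : ∀ t ∈ Finset.Icc 1 T, ConvexOn ℝ Set.univ (l t))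
    (hdiff : ∀ t ∈ Finset.Icc 1 T, Differentiable ℝ (l t))
    (hgrad : ∀ t ∈ Finset.Icc 1 T, ∀ x ∈ K, ‖gradient (l t) x‖ ≤ G)
    (proj : H → H)
    (hprojMem : ∀ z, proj z ∈ K)
    (hprojNear : ∀ z, ∀ c ∈ K, ‖z - proj z‖ ≤ ‖z - c‖)
    (η : ℕ → ℝ) (hη : ∀ t, 1 ≤ t → t ≤ T → η t = D / (G * Real.sqrt t))
    (x : ℕ → H) (hx1 : x 1 ∈ K)
    (hstep : ∀ t, 1 ≤ t → t < T → x (t + 1) = proj (x t - η t • gradient (l t) (x t)))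
    (xstar : H) (hxstar : xstar ∈ K) :
    ∑ t ∈ Finset.Icc 1 T, l t (x t) - ∑ t ∈ Finset.Icc 1 T, l t xstar
      ≤ (3 / 2) * G * D * Real.sqrt T :=
  ogd_regret_decreasing_step_general K hKconv D G hD hG hdiam T hT l hconv hdiff hgrad proj hprojMem
    hprojNear η hη x hx1 hstep xstar hxstar
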